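/- arXiv:2109.13013 — 4 statements merged into one kernel-verified Lean document; each statement's English description precedes it below -/
import Mathlib

section
/- Let f : ℝ^{m×d} → ℝ be separately convex (convex in each entry of the matrix variable separately) and satisfy 0 ≤ f(ξ) ≤ |ξ|^p + Λ for some p ∈ (1,∞) and Λ ≥ 0. Then there is a constant C depending only on p and m+d such that for all ξ₀, ξ₁ ∈ ℝ^{m×d}: |f(ξ₁) − f(ξ₀)| ≤ C((Λ^{1/p} + |ξ₀| + |ξ₁|)^{p−1} + Λ^{(p−1)/p}) |ξ₁ − ξ₀|. -/
open Filter Topology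

noncomputable section

lemma conv1d (g : ℝ → ℝ) (hg : ConvexOn ℝ Set.univ g) {M r : ℝ} (hr : 0 < r)
    (hge : ∀ x, 0 ≤ g x) {a b : ℝ} (hab : a ≤ b)
    (h1 : g (b + r) ≤ M) (h2 : g (a - r) ≤ M) :
    |g b - g a| ≤ M / r * |b - a| := by
  rcases eq_or_lt_of_le hab with rfl | hab
  · simp
  have hba : 0 < b - a := sub_pos.mpr hab
  have hup := hg.slope_mono_adjacent (Set.mem_univ a) (Set.mem_univ (b + r)) hab
      (lt_add_of_pos_right b hr)
  have hlo := hg.slope_mono_adjacent (Set.mem_univ (a - r)) (Set.mem_univ b)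
      (sub_lt_self a hr) hab
  have e1 : b + r - b = r := by ring
  have e2 : a - (a - r) = r := by ring
  rw [e1] at hup
  rw [e2] at hlo
  have h3 : (g b - g a) / (b - a) ≤ M / r := hup.trans (by
    gcongr
    linarith [hge b])
  have h4 : -(M / r) ≤ (g b - g a) / (b - a) := by
    refine le_trans ?_ hlo
    rw [neg_div']
    gcongr
    linarith [hge a]
  rw [div_le_iff₀ hba] at h3
  rw [le_div_iff₀ hba] at h4
  rw [abs_of_pos hba, abs_le]
  constructor <;> nlinarith

lemma euclid_norm_le {ι : Type*} [Fintype ι] (x y : EuclideanSpace ℝ ι)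
    (h : ∀ j, |x j| ≤ |y j|) : ‖x‖ ≤ ‖y‖ := by
  rw [EuclideanSpace.norm_eq, EuclideanSpace.norm_eq]
  apply Real.sqrt_le_sqrt
  apply Finset.sum_le_sum
  intro i _
  simp only [Real.norm_eq_abs]
  exact pow_le_pow_left₀ (abs_nonneg _) (h i) 2

lemma euclid_coord_le {ι : Type*} [DecidableEq ι] [Fintype ι] (x : EuclideanSpace ℝ ι) (k : ι) :
    |x k| ≤ ‖x‖ := by
  have := euclid_norm_le (EuclideanSpace.single k (x k)) x (by
    intro j
    rw [EuclideanSpace.single_apply]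
    by_cases h : j = k
    · subst h; simp
    · simp [h])
  rwa [EuclideanSpace.norm_single, Real.norm_eq_abs] at this

lemma sc_aux {ι : Type*} [Fintype ι] [DecidableEq ι] (p : ℝ) (hp : 1 < p)
    (f : EuclideanSpace ℝ ι → ℝ) (Λ : ℝ) (hΛ : 0 ≤ Λ)
    (hsc : ∀ (ξ : EuclideanSpace ℝ ι) (k : ι),
      ConvexOn ℝ Set.univ (fun t : ℝ => f (ξ + t • EuclideanSpace.single k 1)))
    (hgrow : ∀ ξ, 0 ≤ f ξ ∧ f ξ ≤ ‖ξ‖ ^ p + Λ) (ξ₀ ξ₁ : EuclideanSpace ℝ ι) :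
    |f ξ₁ - f ξ₀| ≤ (3 ^ p + 1) * ((Fintype.card ι : ℝ) + 1) *
      ((Λ ^ (1/p) + ‖ξ₀‖ + ‖ξ₁‖) ^ (p - 1) + Λ ^ ((p - 1)/p)) * ‖ξ₁ - ξ₀‖ := by
  have hp0 : (0:ℝ) < p := lt_trans one_pos hp
  set R : ℝ := Λ ^ (1/p) + ‖ξ₀‖ + ‖ξ₁‖ with hRdef
  have hΛp : (0:ℝ) ≤ Λ ^ (1/p) := Real.rpow_nonneg hΛ _
  have hn0 : (0:ℝ) ≤ ‖ξ₀‖ := norm_nonneg _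
  have hn1 : (0:ℝ) ≤ ‖ξ₁‖ := norm_nonneg _
  have hR0 : 0 ≤ R := by positivity
  rcases eq_or_lt_of_le hR0 with hReq | hRpos
  · -- degenerate case R = 0
    have h0 : ‖ξ₁ - ξ₀‖ = 0 := by
      have h1 : ‖ξ₁ - ξ₀‖ ≤ ‖ξ₁‖ + ‖ξ₀‖ := norm_sub_le _ _
      rw [hRdef] at hReq
      exact le_antisymm (by linarith) (norm_nonneg _)
    have hξ : ξ₁ = ξ₀ := by
      rwa [norm_eq_zero, sub_eq_zero] at h0
    rw [hξ, sub_self, abs_zero, sub_self, norm_zero, mul_zero]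
  -- main case
  have hΛR : Λ ≤ R ^ p := by
    have h1 : Λ ^ (1/p) ≤ R := by rw [hRdef]; linarith
    have h2 : (Λ ^ (1/p)) ^ p ≤ R ^ p := Real.rpow_le_rpow hΛp h1 hp0.le
    rwa [← Real.rpow_mul hΛ, one_div_mul_cancel hp0.ne', Real.rpow_one] at h2
  set M : ℝ := (3 * R) ^ p + Λ with hMdef
  have hM0 : 0 ≤ M := by
    have : (0:ℝ) ≤ (3 * R) ^ p := Real.rpow_nonneg (by linarith) _
    rw [hMdef]; linarith
  have hMle : ∀ ξ : EuclideanSpace ℝ ι, ‖ξ‖ ≤ 3 * R → f ξ ≤ M := by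
    intro ξ hξ
    refine (hgrow ξ).2.trans ?_
    have := Real.rpow_le_rpow (norm_nonneg ξ) hξ hp0.le
    rw [hMdef]; linarith
  -- the coordinate-switching family
  have hstep : ∀ (S : Finset ι) (k : ι), k ∉ S →
      |f (WithLp.toLp 2 <| fun j => if j ∈ insert k S then ξ₁ j else ξ₀ j) -
        f (WithLp.toLp 2 <| fun j => if j ∈ S then ξ₁ j else ξ₀ j)| ≤ M / R * |ξ₁ k - ξ₀ k| := by
    intro S k hk
    set XS : EuclideanSpace ℝ ι := (WithLp.toLp 2 <| fun j => if j ∈ S then ξ₁ j else ξ₀ j) with hXSdef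
    set XkS : EuclideanSpace ℝ ι := (WithLp.toLp 2 <| fun j => if j ∈ insert k S then ξ₁ j else ξ₀ j)
      with hXkSdef
    set η : EuclideanSpace ℝ ι := (WithLp.toLp 2 <| fun j => if j = k then 0 else XS j) with hηdef
    set g : ℝ → ℝ := fun t => f (η + t • EuclideanSpace.single k 1) with hgdef
    have hpt : ∀ (t : ℝ) (v : EuclideanSpace ℝ ι),
        (∀ j, (if j = k then t else XS j) = v j) →
        η + t • EuclideanSpace.single k 1 = v := by
      intro t v hv
      ext j
      rw [PiLp.add_apply, PiLp.smul_apply, EuclideanSpace.single_apply]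
      rw [← hv j, hηdef]
      by_cases h : j = k <;> simp [h]
    have hga : g (ξ₀ k) = f XS :=
      congrArg f (hpt (ξ₀ k) XS (by
        intro j
        by_cases h : j = k
        · subst h; simp [hXSdef, hk]
        · simp [h]))
    have hgb : g (ξ₁ k) = f XkS :=
      congrArg f (hpt (ξ₁ k) XkS (by
        intro j
        by_cases h : j = k
        · subst h; simp [hXkSdef]
        · simp [hXSdef, hXkSdef, h, Finset.mem_insert]))
    have hconv : ConvexOn ℝ Set.univ g := hsc η k
    have hge : ∀ t, 0 ≤ g t := fun t => (hgrow _).1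
    -- norm of η
    set A : EuclideanSpace ℝ ι := (WithLp.toLp 2 <| fun j => |ξ₀ j| + |ξ₁ j|) with hAdef
    have hηnorm : ‖η‖ ≤ R := by
      have h1 : ‖η‖ ≤ ‖A‖ := by
        apply euclid_norm_le
        intro j
        simp only [hηdef, hAdef, PiLp.toLp_apply]
        have hAnn : (0:ℝ) ≤ |ξ₀ j| + |ξ₁ j| := by positivity
        rw [abs_of_nonneg hAnn]
        by_cases h : j = k
        · simp only [if_pos h, abs_zero]; positivity
        · simp only [if_neg h, hXSdef, PiLp.toLp_apply]
          by_cases hj : j ∈ S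
          · rw [if_pos hj]; linarith [abs_nonneg (ξ₀ j)]
          · rw [if_neg hj]; linarith [abs_nonneg (ξ₁ j)]
      have h2 : ‖A‖ ≤ ‖ξ₀‖ + ‖ξ₁‖ := by
        set A0 : EuclideanSpace ℝ ι := (WithLp.toLp 2 <| fun j => |ξ₀ j|) with hA0
        set A1 : EuclideanSpace ℝ ι := (WithLp.toLp 2 <| fun j => |ξ₁ j|) with hA1
        have hAe : A = A0 + A1 := by
          ext j; simp only [PiLp.add_apply, hAdef, hA0, hA1, PiLp.toLp_apply]
        have e0 : ‖A0‖ = ‖ξ₀‖ := le_antisymm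
          (euclid_norm_le _ _ (fun j => by simp [hA0]))
          (euclid_norm_le _ _ (fun j => by simp [hA0]))
        have e1 : ‖A1‖ = ‖ξ₁‖ := le_antisymm
          (euclid_norm_le _ _ (fun j => by simp [hA1]))
          (euclid_norm_le _ _ (fun j => by simp [hA1]))
        rw [hAe]
        calc ‖A0 + A1‖ ≤ ‖A0‖ + ‖A1‖ := norm_add_le _ _
          _ = ‖ξ₀‖ + ‖ξ₁‖ := by rw [e0, e1]
      rw [hRdef]; linarith
    -- bound on g on the relevant window
    have hgM : ∀ s : ℝ, |s| ≤ 2 * R → g s ≤ M := by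
      intro s hs
      rw [hgdef]
      apply hMle
      calc ‖η + s • EuclideanSpace.single k 1‖
          ≤ ‖η‖ + ‖s • EuclideanSpace.single k 1‖ := norm_add_le _ _
        _ = ‖η‖ + |s| := by
            rw [norm_smul, EuclideanSpace.norm_single, norm_one, mul_one, Real.norm_eq_abs]
        _ ≤ 3 * R := by linarith
    have habs0 : |ξ₀ k| ≤ ‖ξ₀‖ := euclid_coord_le ξ₀ k
    have habs1 : |ξ₁ k| ≤ ‖ξ₁‖ := euclid_coord_le ξ₁ k
    have hle0 : ‖ξ₀‖ ≤ R := by rw [hRdef]; linarith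
    have hle1 : ‖ξ₁‖ ≤ R := by rw [hRdef]; linarith
    have hb1 : |ξ₁ k + R| ≤ 2 * R := by
      have h := abs_add_le (ξ₁ k) R
      rw [abs_of_nonneg hR0] at h
      linarith
    have hb0 : |ξ₀ k + R| ≤ 2 * R := by
      have h := abs_add_le (ξ₀ k) R
      rw [abs_of_nonneg hR0] at h
      linarith
    have hc1 : |ξ₁ k - R| ≤ 2 * R := by
      have h := abs_sub (ξ₁ k) R
      rw [abs_of_nonneg hR0] at h
      linarith
    have hc0 : |ξ₀ k - R| ≤ 2 * R := by
      have h := abs_sub (ξ₀ k) R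
      rw [abs_of_nonneg hR0] at h
      linarith
    rcases le_total (ξ₀ k) (ξ₁ k) with hab | hab
    · have := conv1d g hconv hRpos hge hab (hgM _ hb1) (hgM _ hc0)
      rwa [hga, hgb] at this
    · have := conv1d g hconv hRpos hge hab (hgM _ hb0) (hgM _ hc1)
      rw [hga, hgb] at this
      rw [abs_sub_comm (f XkS), abs_sub_comm (ξ₁ k)]
      exact this
  -- telescoping over all coordinates
  have key : ∀ S : Finset ι,
      |f (WithLp.toLp 2 <| fun j => if j ∈ S then ξ₁ j else ξ₀ j) - f ξ₀| ≤
        M / R * ∑ k ∈ S, |ξ₁ k - ξ₀ k| := by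
    intro S
    induction S using Finset.induction_on with
    | empty =>
      have : (WithLp.toLp 2 <| fun j => if j ∈ (∅ : Finset ι) then ξ₁ j else ξ₀ j) = ξ₀ := by
        ext j; simp
      rw [this]; simp
    | @insert a S hk ih =>
      calc |f (WithLp.toLp 2 <| fun j => if j ∈ insert a S then ξ₁ j else ξ₀ j) - f ξ₀|
          ≤ |f (WithLp.toLp 2 <| fun j => if j ∈ insert a S then ξ₁ j else ξ₀ j) -
              f (WithLp.toLp 2 <| fun j => if j ∈ S then ξ₁ j else ξ₀ j)| +
            |f (WithLp.toLp 2 <| fun j => if j ∈ S then ξ₁ j else ξ₀ j) - f ξ₀| := abs_sub_le _ _ _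
        _ ≤ M / R * |ξ₁ a - ξ₀ a| + M / R * ∑ k ∈ S, |ξ₁ k - ξ₀ k| :=
            add_le_add (hstep S a hk) ih
        _ = M / R * ∑ k ∈ insert a S, |ξ₁ k - ξ₀ k| := by
            rw [Finset.sum_insert hk]; ring
  have hmain := key Finset.univ
  have huniv : (WithLp.toLp 2 <| fun j => if j ∈ (Finset.univ : Finset ι) then ξ₁ j else ξ₀ j) = ξ₁ := by
    ext j; simp
  rw [huniv] at hmain
  -- sum of coordinate differences bound
  have hsum : ∑ k : ι, |ξ₁ k - ξ₀ k| ≤ (Fintype.card ι : ℝ) * ‖ξ₁ - ξ₀‖ := by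
    have h1 : ∀ k ∈ (Finset.univ : Finset ι), |ξ₁ k - ξ₀ k| ≤ ‖ξ₁ - ξ₀‖ := by
      intro k _
      have h : (ξ₁ - ξ₀) k = ξ₁ k - ξ₀ k := rfl
      rw [← h]
      exact euclid_coord_le _ k
    have := Finset.sum_le_card_nsmul Finset.univ _ _ h1
    rw [Finset.card_univ, nsmul_eq_mul] at this
    exact this
  -- bound on M / R
  have hK : M / R ≤ (3 ^ p + 1) * R ^ (p - 1) := by
    have hMub : M ≤ (3 ^ p + 1) * R ^ p := by
      have h : (3 * R) ^ p = 3 ^ p * R ^ p := Real.mul_rpow (by norm_num) hR0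
      rw [hMdef, h]
      have : (0:ℝ) ≤ R ^ p := Real.rpow_nonneg hR0 _
      nlinarith
    have h2 : M / R ≤ (3 ^ p + 1) * R ^ p / R := by gcongr
    refine h2.trans ?_
    rw [mul_div_assoc]
    have h3 : R ^ p / R = R ^ (p - 1) := by
      rw [Real.rpow_sub hRpos, Real.rpow_one]
    rw [h3]
  have hKnn : 0 ≤ M / R := div_nonneg hM0 hR0
  have hsumnn : (0:ℝ) ≤ ∑ k : ι, |ξ₁ k - ξ₀ k| :=
    Finset.sum_nonneg fun _ _ => abs_nonneg _
  have hΛq : (0:ℝ) ≤ Λ ^ ((p - 1)/p) := Real.rpow_nonneg hΛ _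
  have hRp1 : (0:ℝ) ≤ R ^ (p - 1) := Real.rpow_nonneg hR0 _
  have h3p : (0:ℝ) ≤ 3 ^ p + 1 := by positivity
  calc |f ξ₁ - f ξ₀| ≤ M / R * ∑ k : ι, |ξ₁ k - ξ₀ k| := hmain
    _ ≤ ((3 ^ p + 1) * R ^ (p - 1)) * ((Fintype.card ι : ℝ) * ‖ξ₁ - ξ₀‖) :=
        mul_le_mul hK hsum hsumnn (by positivity)
    _ ≤ ((3 ^ p + 1) * (R ^ (p - 1) + Λ ^ ((p - 1)/p))) *
          (((Fintype.card ι : ℝ) + 1) * ‖ξ₁ - ξ₀‖) := by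
        apply mul_le_mul ?_ ?_ (by positivity) (by positivity)
        · gcongr
          linarith
        · gcongr
          linarith
    _ = (3 ^ p + 1) * ((Fintype.card ι : ℝ) + 1) *
          (R ^ (p - 1) + Λ ^ ((p - 1)/p)) * ‖ξ₁ - ξ₀‖ := by ring

/-- A function on `ℝ^{m×d}` (modelled as `EuclideanSpace ℝ (Fin m × Fin d)`) is
separately convex if it is convex along each coordinate direction. -/
def SeparatelyConvex (m d : ℕ) (f : EuclideanSpace ℝ (Fin m × Fin d) → ℝ) : Prop :=
  ∀ (ξ : EuclideanSpace ℝ (Fin m × Fin d)) (k : Fin m × Fin d),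
    ConvexOn ℝ Set.univ (fun t : ℝ => f (ξ + t • EuclideanSpace.single k 1))

/-- A separately convex function with `p`-growth `0 ≤ f(ξ) ≤ |ξ|^p + Λ` satisfies a
local Lipschitz estimate with constant depending only on `p` and `m + d`. -/
theorem separatelyConvex_local_lipschitz (m d : ℕ) (p : ℝ) (hp : 1 < p) :
    ∃ C > (0:ℝ), ∀ (f : EuclideanSpace ℝ (Fin m × Fin d) → ℝ) (Λ : ℝ), 0 ≤ Λ →
      SeparatelyConvex m d f →
      (∀ ξ, 0 ≤ f ξ ∧ f ξ ≤ ‖ξ‖ ^ p + Λ) →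
      ∀ ξ₀ ξ₁, |f ξ₁ - f ξ₀| ≤
        C * ((Λ ^ (1/p) + ‖ξ₀‖ + ‖ξ₁‖) ^ (p - 1) + Λ ^ ((p - 1)/p)) * ‖ξ₁ - ξ₀‖ := by
  refine ⟨(3 ^ p + 1) * ((m * d : ℝ) + 1), by positivity, ?_⟩
  intro f Λ hΛ hsc hgrow ξ₀ ξ₁
  have := sc_aux p hp f Λ hΛ hsc hgrow ξ₀ ξ₁
  have hcard : (Fintype.card (Fin m × Fin d) : ℝ) = (m * d : ℝ) := by
    rw [Fintype.card_prod, Fintype.card_fin, Fintype.card_fin]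
    push_cast
    ring
  rwa [hcard] at this
end
end

section
/- Let f : ℝ^{m×d} → ℝ be convex, differentiable, and satisfy 0 ≤ f(ξ) ≤ |ξ|^p + Λ for some p ∈ (1,∞), Λ ≥ 0. Then for all ξ, z ∈ ℝ^{m×d}: |⟨∇f(ξ), z⟩| ≤ C((Λ^{1/p} + |ξ|)^{p−1} + Λ^{(p−1)/p}) |z|, with C depending only on p and m+d. -/
open Filter Topology

noncomputable section

/-- For a convex differentiable function, the directional derivative is bounded by the
forward difference quotient. -/
lemma fderiv_le_slope_aux {E : Type*} [NormedAddCommGroup E] [NormedSpace ℝ E]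
    (f : E → ℝ) (hconv : ConvexOn ℝ Set.univ f) (hdiff : Differentiable ℝ f)
    (ξ w : E) {t : ℝ} (ht : 0 < t) :
    fderiv ℝ f ξ w ≤ (f (ξ + t • w) - f ξ) / t := by
  set A : ℝ →ᵃ[ℝ] E := AffineMap.lineMap ξ (ξ + w) with hA
  have hAs : ∀ s : ℝ, A s = ξ + s • w := by
    intro s
    simp [hA, AffineMap.lineMap_apply, add_comm]
  have hg : ConvexOn ℝ Set.univ (f ∘ A) := by
    have := hconv.comp_affineMap A
    simpa using this
  have hderiv : HasDerivAt (f ∘ A) (fderiv ℝ f ξ w) 0 := by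
    have hc : HasDerivAt (fun s : ℝ => ξ + s • w) w 0 := by
      simpa using ((hasDerivAt_id (0:ℝ)).smul_const w).const_add ξ
    have h0 : ξ + (0:ℝ) • w = ξ := by simp
    have hF : HasFDerivAt f (fderiv ℝ f ξ) (ξ + (0:ℝ) • w) := by
      rw [h0]; exact (hdiff ξ).hasFDerivAt
    have := hF.comp_hasDerivAt 0 hc
    have heq : (fun s : ℝ => f (ξ + s • w)) = f ∘ A := by
      funext s; simp [hAs s]
    rw [← heq]
    exact this
  have hslope := hg.le_slope_of_hasDerivWithinAt (Set.mem_univ 0) (Set.mem_univ t)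
    ht hderiv.hasDerivWithinAt
  rw [slope_def_field] at hslope
  calc fderiv ℝ f ξ w ≤ ((f ∘ A) t - (f ∘ A) 0) / (t - 0) := hslope
    _ = (f (ξ + t • w) - f ξ) / t := by simp [hAs]

/-- A convex differentiable function on `ℝ^{m×d}` with `p`-growth
`0 ≤ f(ξ) ≤ |ξ|^p + Λ` has a gradient satisfying the degenerate bound
`|⟨∇f(ξ), z⟩| ≤ C((Λ^{1/p} + |ξ|)^{p-1} + Λ^{(p-1)/p})|z|`,
with `C` depending only on `p` and `m + d`. -/
theorem convex_gradient_growth_bound (m d : ℕ) (p : ℝ) (hp : 1 < p) :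
    ∃ C > (0:ℝ), ∀ (f : EuclideanSpace ℝ (Fin m × Fin d) → ℝ) (Λ : ℝ), 0 ≤ Λ →
      ConvexOn ℝ Set.univ f →
      Differentiable ℝ f →
      (∀ ξ, 0 ≤ f ξ ∧ f ξ ≤ ‖ξ‖ ^ p + Λ) →
      ∀ ξ z, |fderiv ℝ f ξ z| ≤
        C * ((Λ ^ (1/p) + ‖ξ‖) ^ (p - 1) + Λ ^ ((p - 1)/p)) * ‖z‖ := by
  have hp0 : (0:ℝ) < p := lt_trans one_pos hp
  refine ⟨(2:ℝ) ^ p + 1, by positivity, ?_⟩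
  intro f Λ hΛ hconv hdiff hbound ξ z
  set C : ℝ := (2:ℝ) ^ p + 1 with hC
  have hCpos : 0 < C := by positivity
  set R : ℝ := Λ ^ (1/p) + ‖ξ‖ with hRdef
  have hRnn : 0 ≤ R := add_nonneg (Real.rpow_nonneg hΛ _) (norm_nonneg ξ)
  by_cases hz : z = 0
  · subst hz
    simp only [map_zero, abs_zero, norm_zero, mul_zero]
    exact le_rfl
  rcases eq_or_lt_of_le hRnn with hR0 | hRpos
  · -- R = 0 : then Λ = 0 and ξ = 0, and 0 is a global minimum so fderiv = 0
    rw [hRdef] at hR0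
    have hξ0 : ‖ξ‖ = 0 := by
      have h1 : 0 ≤ Λ ^ (1/p) := Real.rpow_nonneg hΛ _
      nlinarith [norm_nonneg ξ]
    have hΛ0 : Λ = 0 := by
      have h1 : Λ ^ (1/p) = 0 := by nlinarith [norm_nonneg ξ, Real.rpow_nonneg hΛ (1/p)]
      rcases (Real.rpow_eq_zero hΛ (by positivity)).mp h1 with h
      exact h
    have hξ : ξ = 0 := norm_eq_zero.mp hξ0
    subst hξ
    have hf0 : f 0 = 0 := by
      have h1 := (hbound 0).1
      have h2 := (hbound 0).2
      rw [norm_zero, Real.zero_rpow (ne_of_gt hp0), hΛ0] at h2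
      linarith
    have hmin : IsLocalMin f 0 := by
      apply Filter.Eventually.of_forall
      intro x
      rw [hf0]
      exact (hbound x).1
    rw [hmin.fderiv_eq_zero]
    simp only [ContinuousLinearMap.zero_apply, abs_zero]
    positivity
  · -- main case : R > 0, z ≠ 0
    have hznorm : 0 < ‖z‖ := norm_pos_iff.mpr hz
    set t : ℝ := R / ‖z‖ with htdef
    have ht : 0 < t := div_pos hRpos hznorm
    have hΛleR : Λ ≤ R ^ p := by
      have h1 : Λ ^ (1/p) ≤ R := le_add_of_nonneg_right (norm_nonneg ξ)
      have h2 : (Λ ^ (1/p)) ^ p ≤ R ^ p :=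
        Real.rpow_le_rpow (Real.rpow_nonneg hΛ _) h1 (le_of_lt hp0)
      rwa [← Real.rpow_mul hΛ, one_div,
        inv_mul_cancel₀ (ne_of_gt hp0), Real.rpow_one] at h2
    have key : ∀ w : EuclideanSpace ℝ (Fin m × Fin d), ‖w‖ = ‖z‖ →
        fderiv ℝ f ξ w ≤ C * R ^ (p - 1) * ‖z‖ := by
      intro w hw
      have h1 := fderiv_le_slope_aux f hconv hdiff ξ w ht
      have h2 : f (ξ + t • w) ≤ C * R ^ p := by
        have hnorm : ‖ξ + t • w‖ ≤ 2 * R := by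
          have := norm_add_le ξ (t • w)
          rw [norm_smul, Real.norm_eq_abs, abs_of_pos ht, hw] at this
          have htz : t * ‖z‖ = R := div_mul_cancel₀ R (ne_of_gt hznorm)
          have hξR : ‖ξ‖ ≤ R := le_add_of_nonneg_left (Real.rpow_nonneg hΛ _)
          linarith
        have h3 : ‖ξ + t • w‖ ^ p ≤ (2 * R) ^ p :=
          Real.rpow_le_rpow (norm_nonneg _) hnorm (le_of_lt hp0)
        have h4 : (2 * R) ^ p = 2 ^ p * R ^ p :=
          Real.mul_rpow (by norm_num) hRnn
        have h5 := (hbound (ξ + t • w)).2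
        have h6 : 0 ≤ R ^ p := Real.rpow_nonneg hRnn _
        calc f (ξ + t • w) ≤ ‖ξ + t • w‖ ^ p + Λ := h5
          _ ≤ 2 ^ p * R ^ p + R ^ p := by rw [← h4]; linarith
          _ = C * R ^ p := by rw [hC]; ring
      have h7 : (f (ξ + t • w) - f ξ) / t ≤ C * R ^ p / t := by
        apply div_le_div_of_nonneg_right _ ht.le
        have := (hbound ξ).1; linarith
      have h8 : C * R ^ p / t = C * R ^ (p - 1) * ‖z‖ := by
        have hRp : R ^ p = R ^ (p - 1) * R := by
          rw [← Real.rpow_add_one (ne_of_gt hRpos) (p - 1)]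
          norm_num
        rw [htdef, hRp]
        field_simp
      exact h1.trans (h7.trans (le_of_eq h8))
    have hneg : fderiv ℝ f ξ (-z) = -(fderiv ℝ f ξ z) := map_neg _ z
    have k1 := key z rfl
    have k2 := key (-z) (norm_neg z)
    rw [hneg] at k2
    have habs : |fderiv ℝ f ξ z| ≤ C * R ^ (p - 1) * ‖z‖ := abs_le.mpr ⟨by linarith, k1⟩
    have hmono : C * R ^ (p - 1) * ‖z‖ ≤ C * (R ^ (p - 1) + Λ ^ ((p - 1)/p)) * ‖z‖ := by
      have h9 : 0 ≤ C * Λ ^ ((p - 1)/p) * ‖z‖ :=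
        mul_nonneg (mul_nonneg hCpos.le (Real.rpow_nonneg hΛ _)) (norm_nonneg z)
      have expand : C * (R ^ (p - 1) + Λ ^ ((p - 1)/p)) * ‖z‖
          = C * R ^ (p - 1) * ‖z‖ + C * Λ ^ ((p - 1)/p) * ‖z‖ := by ring
      rw [expand]; linarith
    exact le_trans habs hmono
end
end

section
/- Let (g_ε)_{ε>0} ⊂ L^1(D) be nonnegative functions on a bounded open set D ⊂ ℝ^d such that (i) ∫_D g_ε dx → c·|D| as ε → 0 for a constant c ≥ 0, and (ii) for each k ∈ ℕ, the truncations min{g_ε, k} converge weakly-* in L^∞(D) to the constant c_k := lim min-truncation average, with c_k ↑ c as k → ∞. Then g_ε ⇀ c weakly in L^1(D). -/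
open MeasureTheory Filter Topology

noncomputable section

set_option maxHeartbeats 2000000

/-- Upgrading biting convergence to weak `L¹` convergence: if nonnegative `g_ε ⊂ L¹(D)`
have total integrals converging to `c|D|` and all truncations `min{g_ε, k}` converge
weakly-* in `L^∞(D)` to constants `c_k ↑ c`, then `g_ε ⇀ c` weakly in `L¹(D)`. -/
theorem biting_to_weak_L1
    (d : ℕ) (c : ℝ) (hc : 0 ≤ c)
    (D : Set (EuclideanSpace ℝ (Fin d))) (hD : IsOpen D)
    (hDbdd : Bornology.IsBounded D)
    (g : ℕ → EuclideanSpace ℝ (Fin d) → ℝ)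
    (hgint : ∀ n, IntegrableOn (g n) D)
    (hgnonneg : ∀ n, ∀ᵐ x ∂volume.restrict D, 0 ≤ g n x)
    (htotal : Tendsto (fun n => ∫ x in D, g n x) atTop (𝓝 (c * (volume D).toReal)))
    (ck : ℕ → ℝ) (hmono : Monotone ck) (hck : Tendsto ck atTop (𝓝 c))
    (htrunc : ∀ k : ℕ, ∀ h : EuclideanSpace ℝ (Fin d) → ℝ, IntegrableOn h D →
      Tendsto (fun n => ∫ x in D, min (g n x) (k : ℝ) * h x) atTop
        (𝓝 (ck k * ∫ x in D, h x))) :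
    ∀ φ : EuclideanSpace ℝ (Fin d) → ℝ, Measurable φ → (∃ M, ∀ x, |φ x| ≤ M) →
      Tendsto (fun n => ∫ x in D, g n x * φ x) atTop
        (𝓝 (c * ∫ x in D, φ x)) := by
  rintro φ hφm ⟨M, hM⟩
  have hM0 : 0 ≤ M := le_trans (abs_nonneg _) (hM 0)
  have hDfin : volume D < ⊤ := hDbdd.measure_lt_top
  have hfin : IsFiniteMeasure (volume.restrict D) := by
    constructor; rwa [Measure.restrict_apply_univ]
  set V := (volume D).toReal with hVdef
  have hV0 : 0 ≤ V := ENNReal.toReal_nonneg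
  have hφint : IntegrableOn φ D := by
    refine Integrable.mono' (integrable_const M) hφm.aestronglyMeasurable ?_
    filter_upwards with x using by simpa using hM x
  have hone : IntegrableOn (fun _ => (1 : ℝ)) D := integrable_const 1
  have hint1 : (∫ _x in D, (1 : ℝ)) = V := by simp [hVdef, Measure.real]
  have hminint : ∀ n k, IntegrableOn (fun x => min (g n x) (k : ℝ)) D := fun n k =>
    (hgint n).inf (integrable_const _)
  have hgφint : ∀ n, IntegrableOn (fun x => g n x * φ x) D := by
    intro n
    refine Integrable.mono' ((hgint n).abs.const_mul M)
      ((hgint n).aestronglyMeasurable.mul hφm.aestronglyMeasurable) ?_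
    filter_upwards with x
    rw [Real.norm_eq_abs, abs_mul, mul_comm]
    exact mul_le_mul (hM x) le_rfl (abs_nonneg _) hM0
  have hmφint : ∀ n k, IntegrableOn (fun x => min (g n x) (k : ℝ) * φ x) D := by
    intro n k
    refine Integrable.mono' ((hminint n k).abs.const_mul M)
      ((hminint n k).aestronglyMeasurable.mul hφm.aestronglyMeasurable) ?_
    filter_upwards with x
    rw [Real.norm_eq_abs, abs_mul, mul_comm]
    exact mul_le_mul (hM x) le_rfl (abs_nonneg _) hM0
  -- |∫ φ| ≤ M * V
  have hφbd : |∫ x in D, φ x| ≤ M * V := by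
    have := norm_integral_le_of_norm_le (f := φ) (μ := volume.restrict D)
      (integrable_const M) (by filter_upwards with x using by simpa using hM x)
    simpa [hVdef, mul_comm, Measure.real] using this
  rw [Metric.tendsto_atTop]
  intro ε hε
  set B := M * V + 1 with hBdef
  have hB : 0 < B := by positivity
  -- choose k with c - ck k small
  obtain ⟨k, hk⟩ : ∃ k, c - ck k < ε / (4 * B) := by
    have h1 : c - ε / (4 * B) < c := by
      have : 0 < ε / (4 * B) := by positivity
      linarith
    obtain ⟨k, hk⟩ := (hck.eventually (eventually_gt_nhds h1)).exists
    exact ⟨k, by linarith⟩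
  have hckk : ck k ≤ c := hmono.ge_of_tendsto hck k
  -- T1 : difference of total masses tends to (c - ck k) * V
  have h1 := htrunc k (fun _ => 1) hone
  simp only [mul_one] at h1
  rw [hint1] at h1
  have T1 : Tendsto (fun n => (∫ x in D, g n x) - ∫ x in D, min (g n x) (k : ℝ))
      atTop (𝓝 ((c - ck k) * V)) := by
    have := htotal.sub h1
    simpa [sub_mul] using this
  have T2 := htrunc k φ hφint
  -- eventual bounds
  have E1 : ∀ᶠ n in atTop,
      (∫ x in D, g n x) - (∫ x in D, min (g n x) (k : ℝ))
        < (c - ck k) * V + ε / (4 * (M + 1)) := by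
    refine T1.eventually (eventually_lt_nhds ?_)
    have : 0 < ε / (4 * (M + 1)) := by positivity
    linarith
  have E2 : ∀ᶠ n in atTop,
      |(∫ x in D, min (g n x) (k : ℝ) * φ x) - ck k * ∫ x in D, φ x| < ε / 4 := by
    have := Metric.tendsto_atTop.mp T2 (ε / 4) (by positivity)
    obtain ⟨N, hN⟩ := this
    exact eventually_atTop.2 ⟨N, fun n hn => by simpa [Real.dist_eq] using hN n hn⟩
  obtain ⟨N, hN⟩ := eventually_atTop.1 (E1.and E2)
  refine ⟨N, fun n hn => ?_⟩
  obtain ⟨hE1, hE2⟩ := hN n hn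
  rw [Real.dist_eq]
  -- bound the remainder term
  have hrem : |(∫ x in D, g n x * φ x) - ∫ x in D, min (g n x) (k : ℝ) * φ x|
      ≤ M * ((∫ x in D, g n x) - ∫ x in D, min (g n x) (k : ℝ)) := by
    have heq : (∫ x in D, g n x * φ x) - (∫ x in D, min (g n x) (k : ℝ) * φ x)
        = ∫ x in D, (g n x - min (g n x) (k : ℝ)) * φ x := by
      rw [← integral_sub (hgφint n) (hmφint n k)]
      congr 1; ext x; ring
    have hbd := norm_integral_le_of_norm_le
      (f := fun x => (g n x - min (g n x) (k : ℝ)) * φ x) (μ := volume.restrict D)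
      (g := fun x => M * (g n x - min (g n x) (k : ℝ)))
      (((hgint n).sub (hminint n k)).const_mul M) ?_
    · rw [heq]
      calc |∫ x in D, (g n x - min (g n x) (k : ℝ)) * φ x|
          ≤ ∫ x in D, M * (g n x - min (g n x) (k : ℝ)) := by
            simpa [Real.norm_eq_abs] using hbd
        _ = M * ((∫ x in D, g n x) - ∫ x in D, min (g n x) (k : ℝ)) := by
            rw [integral_const_mul, integral_sub (hgint n) (hminint n k)]
    · filter_upwards with x
      rw [Real.norm_eq_abs, abs_mul,
        abs_of_nonneg (sub_nonneg.2 (min_le_left (g n x) (k : ℝ)))]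
      rw [mul_comm M]
      exact mul_le_mul le_rfl (hM x) (abs_nonneg _)
        (sub_nonneg.2 (min_le_left (g n x) (k : ℝ)))
  -- assemble
  have hdec : (∫ x in D, g n x * φ x) - c * ∫ x in D, φ x
      = ((∫ x in D, g n x * φ x) - ∫ x in D, min (g n x) (k : ℝ) * φ x)
        + ((∫ x in D, min (g n x) (k : ℝ) * φ x) - ck k * ∫ x in D, φ x)
        + (ck k - c) * ∫ x in D, φ x := by ring
  have hthird : |(ck k - c) * ∫ x in D, φ x| ≤ (c - ck k) * (M * V) := by
    rw [abs_mul, abs_of_nonpos (by linarith : ck k - c ≤ 0), neg_sub]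
    exact mul_le_mul le_rfl hφbd (abs_nonneg _) (by linarith)
  have habs : |(∫ x in D, g n x * φ x) - c * ∫ x in D, φ x|
      ≤ M * ((∫ x in D, g n x) - ∫ x in D, min (g n x) (k : ℝ))
        + |(∫ x in D, min (g n x) (k : ℝ) * φ x) - ck k * ∫ x in D, φ x|
        + (c - ck k) * (M * V) := by
    rw [hdec]
    have ha1 := abs_add_le
      (((∫ x in D, g n x * φ x) - ∫ x in D, min (g n x) (k : ℝ) * φ x)
        + ((∫ x in D, min (g n x) (k : ℝ) * φ x) - ck k * ∫ x in D, φ x))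
      ((ck k - c) * ∫ x in D, φ x)
    have ha2 := abs_add_le
      ((∫ x in D, g n x * φ x) - ∫ x in D, min (g n x) (k : ℝ) * φ x)
      ((∫ x in D, min (g n x) (k : ℝ) * φ x) - ck k * ∫ x in D, φ x)
    linarith [hrem, hthird, ha1, ha2]
  -- final arithmetic
  set t := c - ck k with htdef
  have ht0 : 0 ≤ t := by simp [htdef]; linarith
  have htB : t < ε / (4 * B) := hk
  have hMV : M * V ≤ B - 1 + 1 := by simp [hBdef]
  have h1' : M * ((∫ x in D, g n x) - ∫ x in D, min (g n x) (k : ℝ))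
      ≤ M * (t * V + ε / (4 * (M + 1))) :=
    mul_le_mul_of_nonneg_left (le_of_lt hE1) hM0
  have hMtV : M * (t * V) ≤ t * B := by
    have : M * V ≤ B := by rw [hBdef]; linarith
    calc M * (t * V) = t * (M * V) := by ring
      _ ≤ t * B := mul_le_mul_of_nonneg_left this ht0
  have hMe : M * (ε / (4 * (M + 1))) ≤ ε / 4 := by
    have h1 : M * (ε / (4 * (M + 1))) ≤ (M + 1) * (ε / (4 * (M + 1))) :=
      mul_le_mul_of_nonneg_right (by linarith) (by positivity)
    have h2 : (M + 1) * (ε / (4 * (M + 1))) = ε / 4 := by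
      field_simp
    linarith
  have htB' : t * B < ε / 4 := by
    have h1 : t * B < (ε / (4 * B)) * B := mul_lt_mul_of_pos_right htB hB
    have h2 : (ε / (4 * B)) * B = ε / 4 := by field_simp
    linarith
  have htMV : t * (M * V) ≤ t * B :=
    mul_le_mul_of_nonneg_left (by rw [hBdef]; linarith) ht0
  have hexp : M * (t * V + ε / (4 * (M + 1)))
      = M * (t * V) + M * (ε / (4 * (M + 1))) := by ring
  clear_value t B V
  have c1 : M * ((∫ x in D, g n x) - ∫ x in D, min (g n x) (k : ℝ))
      ≤ t * B + ε / 4 := by linarith [h1', hexp, hMtV, hMe]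
  linarith [habs, c1, hE2, htMV, htB']
end
end

section
/- Let d ≥ 2, Q = (0,1)^d, p ∈ (1,∞), and λ : (0,1) → (0,∞) measurable, bounded below by s > 0, with λ^{-p/(p-1)} ∈ L^1(0,1). Define v(x₁) = (∫_0^1 λ(t)^{-p/(p-1)} dt)^{-1} ∫_0^{x₁} λ(t)^{-p/(p-1)} dt − x₁ for x₁ ∈ (0,1), extended to Q as u(x) = v(x₁). Then u ∈ W^{1,∞}(Q), u = 0 on the faces {x₁=0} and {x₁=1}, and ∫_Q λ(x₁)^p |e₁ + ∇u(x)|^p dx = (∫_0^1 λ(t)^{-p/(p-1)} dt)^{1−p}. -/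
open MeasureTheory Filter Topology

noncomputable section

/-- `u` has weak gradient (vector field) `G` on the open set `Q`. -/
def HasWeakGradOn {d : ℕ} (μ : Measure (EuclideanSpace ℝ (Fin d)))
    (Q : Set (EuclideanSpace ℝ (Fin d))) (u : EuclideanSpace ℝ (Fin d) → ℝ)
    (G : EuclideanSpace ℝ (Fin d) → EuclideanSpace ℝ (Fin d)) : Prop :=
  ∀ φ : EuclideanSpace ℝ (Fin d) → ℝ, ContDiff ℝ (⊤ : ℕ∞) φ → HasCompactSupport φ →
    tsupport φ ⊆ Q → ∀ w : EuclideanSpace ℝ (Fin d),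
      ∫ x in Q, fderiv ℝ φ x w * u x ∂μ = - ∫ x in Q, φ x * (inner ℝ (G x) w : ℝ) ∂μ

section AuxLemmas

open Set

lemma ae_hasDerivAt_primitive {h : ℝ → ℝ} (hint : Integrable h) :
    ∀ᵐ t : ℝ, HasDerivAt (fun y => ∫ s in (0:ℝ)..y, h s) (h t) t := by
  filter_upwards [(IsUnifLocDoublingMeasure.vitaliFamily (volume : Measure ℝ) 1).ae_tendsto_average
      hint.locallyIntegrable] with x hx
  rw [hasDerivAt_iff_tendsto_slope]
  set F : ℝ → ℝ := fun y => ∫ s in (0:ℝ)..y, h s with hF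
  have key : ∀ a b : ℝ, a < b → slope F a b = ⨍ y in Icc a b, h y := by
    intro a b hab
    rw [slope_def_field, setAverage_eq, hF]
    have h1 : F b - F a = ∫ s in a..b, h s :=
      intervalIntegral.integral_interval_sub_left hint.intervalIntegrable
        hint.intervalIntegrable
    have h2 : ∫ y in Icc a b, h y = ∫ s in a..b, h s := by
      rw [intervalIntegral.integral_of_le hab.le, integral_Icc_eq_integral_Ioc]
    rw [h2, Real.volume_real_Icc_of_le hab.le, smul_eq_mul, ← h1]
    ring
  rw [← nhdsLT_sup_nhdsGT, tendsto_sup]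
  constructor
  · apply Tendsto.congr' _ (hx.comp (Real.tendsto_Icc_vitaliFamily_left x))
    filter_upwards [self_mem_nhdsWithin] with y (hy : y < x)
    rw [Function.comp_apply, ← key y x hy, slope_comm]
  · apply Tendsto.congr' _ (hx.comp (Real.tendsto_Icc_vitaliFamily_right x))
    filter_upwards [self_mem_nhdsWithin] with y (hy : x < y)
    rw [Function.comp_apply, ← key x y hy]

lemma ae_coord_not_mem {d : ℕ} (i : Fin d) {N : Set ℝ} (hN : volume N = 0) :
    ∀ᵐ x : EuclideanSpace ℝ (Fin d), x i ∉ N := by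
  obtain ⟨N', hNN', hN'meas, hN'⟩ := exists_measurable_superset_of_null hN
  have hpi : (volume : Measure (Fin d → ℝ)) {y | y i ∈ N'} = 0 := by
    have hset : {y : Fin d → ℝ | y i ∈ N'} =
        Set.pi Set.univ (fun j => if j = i then N' else Set.univ) := by
      ext y
      simp only [Set.mem_setOf_eq, Set.mem_pi, Set.mem_univ, forall_true_left]
      constructor
      · intro hy j
        by_cases hj : j = i <;> simp [hj, hy]
      · intro hy
        have := hy i
        simpa using this
    rw [hset, volume_pi_pi]
    refine Finset.prod_eq_zero (Finset.mem_univ i) ?_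
    simp [hN']
  have hpre : (volume : Measure (EuclideanSpace ℝ (Fin d)))
      (((MeasurableEquiv.toLp 2 (Fin d → ℝ)).symm) ⁻¹' {y | y i ∈ N'}) = 0 :=
    ((EuclideanSpace.volume_preserving_symm_measurableEquiv_toLp (ι := Fin d)).measure_preimage_emb
      ((MeasurableEquiv.toLp 2 (Fin d → ℝ)).symm).measurableEmbedding _).trans hpi
  have hsub : {x : EuclideanSpace ℝ (Fin d) | x i ∈ N} ⊆
      ((MeasurableEquiv.toLp 2 (Fin d → ℝ)).symm) ⁻¹' {y | y i ∈ N'} := by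
    intro x hx
    exact hNN' hx
  rw [ae_iff]
  refine measure_mono_null ?_ hpre
  intro x hx
  exact hsub (not_not.mp hx)

lemma integral_cube_coord {d : ℕ} (i : Fin d) (f : ℝ → ℝ) :
    ∫ x in {x : EuclideanSpace ℝ (Fin d) | ∀ j, x j ∈ Set.Ioo (0:ℝ) 1}, f (x i) =
      ∫ t in Set.Ioo (0:ℝ) 1, f t := by
  classical
  set T : Set (Fin d → ℝ) := {y | ∀ j, y j ∈ Set.Ioo (0:ℝ) 1} with hT
  have hTmeas : MeasurableSet T := by
    have : T = ⋂ j, (fun y : Fin d → ℝ => y j) ⁻¹' Set.Ioo (0:ℝ) 1 := by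
      ext y; simp [hT]
    rw [this]
    exact MeasurableSet.iInter fun j => measurableSet_Ioo.preimage (measurable_pi_apply j)
  have hpre : {x : EuclideanSpace ℝ (Fin d) | ∀ j, x j ∈ Set.Ioo (0:ℝ) 1} =
      ((MeasurableEquiv.toLp 2 (Fin d → ℝ)).symm) ⁻¹' T := rfl
  have step1 : ∫ x in {x : EuclideanSpace ℝ (Fin d) | ∀ j, x j ∈ Set.Ioo (0:ℝ) 1}, f (x i) =
      ∫ y in T, f (y i) := by
    rw [hpre]
    exact (EuclideanSpace.volume_preserving_symm_measurableEquiv_toLp (ι := Fin d)).setIntegral_preimage_emb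
      ((MeasurableEquiv.toLp 2 (Fin d → ℝ)).symm).measurableEmbedding (fun y => f (y i)) T
  rw [step1]
  set g : Fin d → ℝ → ℝ :=
    fun j => (Set.Ioo (0:ℝ) 1).indicator (if j = i then f else fun _ => (1:ℝ)) with hg
  have step2 : ∫ y in T, f (y i) = ∫ y : Fin d → ℝ, ∏ j, g j (y j) := by
    rw [← integral_indicator hTmeas]
    congr 1
    funext y
    by_cases hy : y ∈ T
    · rw [Set.indicator_of_mem hy]
      have : ∀ j, g j (y j) = if j = i then f (y j) else 1 := by
        intro j
        rw [hg]
        simp only []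
        rw [Set.indicator_of_mem (hy j)]
        by_cases hj : j = i <;> simp [hj]
      simp only [this]
      simp
    · rw [Set.indicator_of_notMem hy]
      obtain ⟨j, hj⟩ : ∃ j, y j ∉ Set.Ioo (0:ℝ) 1 := by
        by_contra hcon
        push_neg at hcon
        exact hy hcon
      refine (Finset.prod_eq_zero (Finset.mem_univ j) ?_).symm
      rw [hg]
      simp only []
      exact Set.indicator_of_notMem hj _
  rw [step2, MeasureTheory.integral_fintype_prod_volume_eq_prod g]
  have hone : ∀ j, j ≠ i → ∫ t, g j t = 1 := by
    intro j hj
    rw [hg]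
    simp only [if_neg hj]
    rw [integral_indicator measurableSet_Ioo, setIntegral_const, Real.volume_real_Ioo]
    norm_num
  rw [Finset.prod_eq_single i (fun b _ hb => hone b hb) (by simp)]
  rw [hg]
  simp only [if_pos rfl]
  exact integral_indicator measurableSet_Ioo

end AuxLemmas

/-- The optimal one-dimensional competitor on the unit cube: for a weight `λ` bounded
below with `λ^{-p/(p-1)} ∈ L¹(0,1)`, the function
`u(x) = (∫₀¹ λ^{-p/(p-1)})⁻¹ ∫₀^{x₁} λ^{-p/(p-1)} − x₁` is Lipschitz on `Q`, vanishes
on the faces `{x₁=0}`, `{x₁=1}`, and `∫_Q λ(x₁)^p |e₁ + ∇u|^p = (∫₀¹ λ^{-p/(p-1)})^{1-p}`. -/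
theorem one_dimensional_competitor
    (d : ℕ) (hd : 2 ≤ d) (p : ℝ) (hp : 1 < p)
    (lam : ℝ → ℝ) (hlam_meas : Measurable lam)
    (s : ℝ) (hs : 0 < s) (hlam_lb : ∀ t ∈ Set.Ioo (0:ℝ) 1, s ≤ lam t)
    (hlam_int : IntegrableOn (fun t => lam t ^ (-(p / (p - 1)))) (Set.Ioo (0:ℝ) 1))
    (Q : Set (EuclideanSpace ℝ (Fin d)))
    (hQ : Q = {x : EuclideanSpace ℝ (Fin d) | ∀ i, x i ∈ Set.Ioo (0:ℝ) 1})
    (I : ℝ) (hI : I = ∫ t in Set.Ioo (0:ℝ) 1, lam t ^ (-(p / (p - 1))))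
    (v : ℝ → ℝ)
    (hv : ∀ t, v t = I⁻¹ * (∫ s' in Set.Ioo (0:ℝ) t, lam s' ^ (-(p / (p - 1)))) - t)
    (u : EuclideanSpace ℝ (Fin d) → ℝ)
    (hu : ∀ x, u x = v (x ⟨0, by omega⟩)) :
    (∃ L : NNReal, LipschitzOnWith L u Q) ∧
    v 0 = 0 ∧ v 1 = 0 ∧
    (∀ x : EuclideanSpace ℝ (Fin d), x ⟨0, by omega⟩ = 0 → u x = 0) ∧
    (∀ x : EuclideanSpace ℝ (Fin d), x ⟨0, by omega⟩ = 1 → u x = 0) ∧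
    ∃ G : EuclideanSpace ℝ (Fin d) → EuclideanSpace ℝ (Fin d),
      HasWeakGradOn volume Q u G ∧
      ∫ x in Q, lam (x ⟨0, by omega⟩) ^ p *
        ‖(EuclideanSpace.single (⟨0, by omega⟩ : Fin d) (1:ℝ)) + G x‖ ^ p =
        I ^ ((1:ℝ) - p) := by
  classical
  set i0 : Fin d := ⟨0, by omega⟩ with hi0
  have hp1 : (0:ℝ) < p - 1 := by linarith
  set e : ℝ := -(p / (p - 1)) with he
  have he_nonpos : e ≤ 0 := by
    rw [he]
    have : 0 ≤ p / (p - 1) := div_nonneg (by linarith) hp1.le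
    linarith
  set f : ℝ → ℝ := fun t => lam t ^ e with hf
  have hf_pos : ∀ t ∈ Set.Ioo (0:ℝ) 1, 0 < f t := fun t ht =>
    Real.rpow_pos_of_pos (lt_of_lt_of_le hs (hlam_lb t ht)) e
  set M : ℝ := s ^ e with hM
  have hM_pos : 0 < M := Real.rpow_pos_of_pos hs e
  have hf_le : ∀ t ∈ Set.Ioo (0:ℝ) 1, f t ≤ M :=
    fun t ht => Real.rpow_le_rpow_of_nonpos hs (hlam_lb t ht) he_nonpos
  set f₀ : ℝ → ℝ := (Set.Ioo (0:ℝ) 1).indicator f with hf₀def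
  have hf₀int : Integrable f₀ := by
    rw [hf₀def, integrable_indicator_iff measurableSet_Ioo]
    exact hlam_int
  have hf₀bd : ∀ t, ‖f₀ t‖ ≤ M := by
    intro t
    rw [hf₀def]
    by_cases ht : t ∈ Set.Ioo (0:ℝ) 1
    · rw [Set.indicator_of_mem ht, Real.norm_eq_abs, abs_of_pos (hf_pos t ht)]
      exact hf_le t ht
    · rw [Set.indicator_of_notMem ht]
      simpa using hM_pos.le
  set F₀ : ℝ → ℝ := fun y => ∫ s' in (0:ℝ)..y, f₀ s' with hF₀def
  have hF₀sub : ∀ a b : ℝ, F₀ b - F₀ a = ∫ s' in a..b, f₀ s' := fun a b =>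
    intervalIntegral.integral_interval_sub_left hf₀int.intervalIntegrable
      hf₀int.intervalIntegrable
  have hF₀lip : ∀ a b : ℝ, |F₀ b - F₀ a| ≤ M * |b - a| := by
    intro a b
    rw [hF₀sub a b]
    exact intervalIntegral.norm_integral_le_of_norm_le_const (fun t _ => hf₀bd t)
  -- v in terms of F₀ on [0,1]
  have hvF₀ : ∀ t ∈ Set.Icc (0:ℝ) 1, v t = I⁻¹ * F₀ t - t := by
    intro t ht
    rw [hv t]
    congr 1
    congr 1
    rw [hF₀def]
    have h1 : ∫ s' in Set.Ioo (0:ℝ) t, lam s' ^ (-(p / (p - 1))) = ∫ s' in Set.Ioo (0:ℝ) t, f₀ s' := by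
      apply setIntegral_congr_fun measurableSet_Ioo
      intro y hy
      rw [hf₀def, Set.indicator_of_mem]
      exact ⟨hy.1, lt_of_lt_of_le hy.2 ht.2⟩
    rw [h1, ← integral_Ioc_eq_integral_Ioo, ← intervalIntegral.integral_of_le ht.1]
  have hI_pos : 0 < I := by
    rw [hI]
    rw [setIntegral_pos_iff_support_of_nonneg_ae]
    · have hsupp : Set.Ioo (0:ℝ) 1 ⊆ Function.support fun t => lam t ^ (-(p / (p - 1))) := by
        intro t ht
        exact (hf_pos t ht).ne'
      calc (0:ENNReal) < volume (Set.Ioo (0:ℝ) 1) := by simp [Real.volume_Ioo]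
        _ ≤ volume ((Function.support fun t => lam t ^ (-(p / (p - 1)))) ∩ Set.Ioo (0:ℝ) 1) := by
            apply measure_mono
            intro t ht
            exact ⟨hsupp ht, ht⟩
    · rw [EventuallyLE, ae_restrict_iff' measurableSet_Ioo]
      filter_upwards with t ht
      exact (hf_pos t ht).le
    · exact hlam_int
  have hI_ne : I ≠ 0 := hI_pos.ne'
  -- values at endpoints
  have hv0 : v 0 = 0 := by
    rw [hv 0]
    simp
  have hF₀1 : (∫ s' in Set.Ioo (0:ℝ) 1, lam s' ^ (-(p / (p - 1)))) = I := hI.symm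
  have hv1 : v 1 = 0 := by
    rw [hv 1, hF₀1, inv_mul_cancel₀ hI_ne]
    norm_num
  -- clamp and extensions
  set cl : ℝ → ℝ := fun t => max 0 (min 1 t) with hcl
  have hcl_mem : ∀ t, cl t ∈ Set.Icc (0:ℝ) 1 := by
    intro t
    constructor
    · exact le_max_left _ _
    · rw [hcl]
      simp only [max_le_iff]
      exact ⟨zero_le_one, min_le_left _ _⟩
  have hcl_eq : ∀ t ∈ Set.Icc (0:ℝ) 1, cl t = t := by
    intro t ht
    rw [hcl]
    simp only [min_eq_right ht.2] -- min 1 t = t needs t ≤ 1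
    exact max_eq_right ht.1
  have hcl_lip : ∀ a b : ℝ, |cl a - cl b| ≤ |a - b| := by
    intro a b
    rw [hcl]
    calc |max 0 (min 1 a) - max 0 (min 1 b)| ≤ |min 1 a - min 1 b| := by
          rw [max_comm 0 (min 1 a), max_comm 0 (min 1 b)]
          exact abs_max_sub_max_le_abs _ _ _
      _ ≤ |a - b| := by
          refine (abs_min_sub_min_le_max 1 a 1 b).trans ?_
          simp
  set K : ℝ := I⁻¹ * M + 1 with hK
  have hK_pos : 0 < K := by
    rw [hK]
    have : 0 < I⁻¹ * M := mul_pos (inv_pos.2 hI_pos) hM_pos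
    linarith
  have hv_lip : ∀ a ∈ Set.Icc (0:ℝ) 1, ∀ b ∈ Set.Icc (0:ℝ) 1, |v a - v b| ≤ K * |a - b| := by
    intro a ha b hb
    rw [hvF₀ a ha, hvF₀ b hb]
    have h1 : I⁻¹ * F₀ a - a - (I⁻¹ * F₀ b - b) = I⁻¹ * (F₀ a - F₀ b) - (a - b) := by ring
    rw [h1, hK]
    calc |I⁻¹ * (F₀ a - F₀ b) - (a - b)| ≤ |I⁻¹ * (F₀ a - F₀ b)| + |a - b| := abs_sub _ _
      _ ≤ I⁻¹ * (M * |a - b|) + |a - b| := by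
          rw [abs_mul, abs_of_pos (inv_pos.2 hI_pos)]
          have := hF₀lip b a
          gcongr
      _ = (I⁻¹ * M + 1) * |a - b| := by ring
  set vt : ℝ → ℝ := fun t => v (cl t) with hvt
  have hvt_eq : ∀ t ∈ Set.Icc (0:ℝ) 1, vt t = v t := by
    intro t ht
    rw [hvt]
    simp only []
    rw [hcl_eq t ht]
  set ut : EuclideanSpace ℝ (Fin d) → ℝ := fun x => vt (x i0) with hut
  have hcoord_dist : ∀ x y : EuclideanSpace ℝ (Fin d), dist (x i0) (y i0) ≤ dist x y := by
    intro x y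
    rw [EuclideanSpace.dist_eq]
    have h1 : dist (x i0) (y i0) = Real.sqrt (dist (x i0) (y i0) ^ 2) :=
      (Real.sqrt_sq dist_nonneg).symm
    rw [h1]
    apply Real.sqrt_le_sqrt
    exact Finset.single_le_sum (f := fun i => dist (x i) (y i) ^ 2)
      (fun i _ => sq_nonneg _) (Finset.mem_univ i0)
  have hut_lip : LipschitzWith K.toNNReal ut := by
    apply LipschitzWith.of_dist_le_mul
    intro x y
    rw [hut]
    simp only []
    rw [Real.dist_eq]
    calc |vt (x i0) - vt (y i0)| = |v (cl (x i0)) - v (cl (y i0))| := rfl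
      _ ≤ K * |cl (x i0) - cl (y i0)| := by
          rw [← Real.dist_eq (cl (x i0))]
          rw [← Real.dist_eq]
          exact hv_lip _ (hcl_mem _) _ (hcl_mem _)
      _ ≤ K * |x i0 - y i0| := by
          have := hcl_lip (x i0) (y i0)
          gcongr
      _ ≤ K * dist x y := by
          rw [← Real.dist_eq]
          have := hcoord_dist x y
          gcongr
      _ = (K.toNNReal : ℝ) * dist x y := by
          rw [Real.coe_toNNReal K hK_pos.le]
  have hQmeas : MeasurableSet Q := by
    rw [hQ]
    have : {x : EuclideanSpace ℝ (Fin d) | ∀ j, x j ∈ Set.Ioo (0:ℝ) 1} =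
        ⋂ j, (fun x : EuclideanSpace ℝ (Fin d) => x j) ⁻¹' Set.Ioo (0:ℝ) 1 := by
      ext x; simp
    rw [this]
    refine MeasurableSet.iInter fun j => measurableSet_Ioo.preimage ?_
    exact (measurable_pi_apply j).comp ((MeasurableEquiv.toLp 2 (Fin d → ℝ)).symm).measurable
  have hu_eq_ut : ∀ x ∈ Q, u x = ut x := by
    intro x hx
    rw [hu x, hut]
    simp only []
    have hx0 : x i0 ∈ Set.Ioo (0:ℝ) 1 := by
      rw [hQ] at hx
      exact hx i0
    exact (hvt_eq (x i0) (Set.Ioo_subset_Icc_self hx0)).symm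
  refine ⟨⟨K.toNNReal, ?_⟩, hv0, hv1, ?_, ?_, ?_⟩
  · -- Lipschitz on Q
    intro x hx y hy
    rw [hu_eq_ut x hx, hu_eq_ut y hy]
    exact hut_lip x y
  · intro x hx
    rw [hu x, hx]
    exact hv0
  · intro x hx
    rw [hu x, hx]
    exact hv1
  -- gradient field
  set c : ℝ → ℝ := fun t => I⁻¹ * f t - 1 with hc
  set G : EuclideanSpace ℝ (Fin d) → EuclideanSpace ℝ (Fin d) :=
    fun x => c (x i0) • EuclideanSpace.single i0 (1:ℝ) with hG
  have hinnerG : ∀ x w : EuclideanSpace ℝ (Fin d),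
      (inner ℝ (G x) w : ℝ) = c (x i0) * w i0 := by
    intro x w
    rw [hG]
    simp only []
    rw [real_inner_smul_left, EuclideanSpace.inner_single_left]
    simp
  refine ⟨G, ?_, ?_⟩
  · -- weak gradient
    intro φ hφ hφc hφs w
    have hφdiff : Differentiable ℝ φ := hφ.differentiable (by simp)
    obtain ⟨D, hφLip⟩ := ContDiff.lipschitzWith_of_hasCompactSupport hφc hφ (by simp)
    have hφ0 : ∀ x, x ∉ Q → φ x = 0 := fun x hx =>
      image_eq_zero_of_notMem_tsupport (fun hmem => hx (hφs hmem))
    have hfd0 : ∀ x, x ∉ Q → fderiv ℝ φ x = 0 := by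
      intro x hx
      by_contra hne
      exact hx (hφs (support_fderiv_subset ℝ hne))
    have hae := ae_coord_not_mem i0 (ae_iff.mp (ae_hasDerivAt_primitive hf₀int))
    have hIBP := hut_lip.integral_lineDeriv_mul_eq (μ := volume) hφLip hφc w
    calc ∫ x in Q, fderiv ℝ φ x w * u x ∂volume
        = ∫ x in Q, fderiv ℝ φ x w * ut x ∂volume := by
          apply setIntegral_congr_fun hQmeas
          intro x hx
          simp only []
          rw [hu_eq_ut x hx]
      _ = ∫ x, fderiv ℝ φ x w * ut x ∂volume := by
          apply setIntegral_eq_integral_of_forall_compl_eq_zero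
          intro x hx
          rw [hfd0 x hx]
          simp
      _ = ∫ x, lineDeriv ℝ φ x w * ut x ∂volume := by
          congr 1
          funext x
          rw [(hφdiff x).lineDeriv_eq_fderiv]
      _ = - ∫ x, lineDeriv ℝ ut x w * φ x ∂volume := by
          rw [hIBP, ← integral_neg]
          congr 1
          funext x
          rw [(hφdiff x).lineDeriv_eq_fderiv,
            (hφdiff x).lineDeriv_eq_fderiv]
          simp
      _ = - ∫ x, φ x * (inner ℝ (G x) w : ℝ) ∂volume := by
          congr 1
          apply integral_congr_ae
          filter_upwards [hae] with x hx
          by_cases hφx : φ x = 0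
          · simp [hφx]
          · have hxQ : x ∈ Q := hφs (subset_tsupport φ hφx)
            have hx0 : x i0 ∈ Set.Ioo (0:ℝ) 1 := by rw [hQ] at hxQ; exact hxQ i0
            have hder0 : HasDerivAt F₀ (f₀ (x i0)) (x i0) := not_not.mp hx
            have hf₀x : f₀ (x i0) = f (x i0) := Set.indicator_of_mem hx0 f
            have hvt_near : vt =ᶠ[𝓝 (x i0)] (fun y => I⁻¹ * F₀ y - y) := by
              filter_upwards [isOpen_Ioo.mem_nhds hx0] with y hy
              rw [hvt_eq y (Set.Ioo_subset_Icc_self hy), hvF₀ y (Set.Ioo_subset_Icc_self hy)]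
            have hform : HasDerivAt (fun y => I⁻¹ * F₀ y - y) (c (x i0)) (x i0) := by
              rw [hc]
              simp only []
              rw [← hf₀x]
              exact (hder0.const_mul I⁻¹).sub (hasDerivAt_id (x i0))
            have hvtd : HasDerivAt vt (c (x i0)) (x i0) :=
              hform.congr_of_eventuallyEq hvt_near
            have hinnerD : HasDerivAt (fun τ : ℝ => x i0 + τ * w i0) (w i0) 0 :=
              (hasDerivAt_mul_const (w i0)).const_add (x i0)
            have hvtd' : HasDerivAt vt (c (x i0)) ((fun τ : ℝ => x i0 + τ * w i0) 0) := by
              simpa using hvtd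
            have hcomp := HasDerivAt.comp (0:ℝ) hvtd' hinnerD
            have hline : HasLineDerivAt ℝ ut (c (x i0) * w i0) x w := by
              show HasDerivAt (fun τ : ℝ => ut (x + τ • w)) (c (x i0) * w i0) 0
              have hfun : (fun τ : ℝ => ut (x + τ • w))
                  = vt ∘ fun τ : ℝ => x i0 + τ * w i0 := by
                funext τ
                rw [hut]
                simp only [Function.comp]
                congr 1
              rw [hfun]
              exact hcomp
            have hld : lineDeriv ℝ ut x w = c (x i0) * w i0 := hline.lineDeriv
            rw [hld, hinnerG x w]
            ring
      _ = - ∫ x in Q, φ x * (inner ℝ (G x) w : ℝ) ∂volume := by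
          congr 1
          symm
          apply setIntegral_eq_integral_of_forall_compl_eq_zero
          intro x hx
          rw [hφ0 x hx]
          simp
  · -- the integral identity
    have harith : p + e * p = e := by
      rw [he]
      field_simp
      ring
    have hpt : ∀ x ∈ Q, lam (x i0) ^ p * ‖EuclideanSpace.single i0 (1:ℝ) + G x‖ ^ p
        = I⁻¹ ^ p * f (x i0) := by
      intro x hx
      have hx0 : x i0 ∈ Set.Ioo (0:ℝ) 1 := by rw [hQ] at hx; exact hx i0
      have hlamx : 0 < lam (x i0) := lt_of_lt_of_le hs (hlam_lb _ hx0)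
      have hsum : EuclideanSpace.single i0 (1:ℝ) + G x
          = (I⁻¹ * f (x i0)) • EuclideanSpace.single i0 (1:ℝ) := by
        rw [hG, hc]
        simp only []
        rw [sub_smul, one_smul]
        abel
      rw [hsum, norm_smul, EuclideanSpace.norm_single]
      have hposx : 0 < I⁻¹ * f (x i0) := mul_pos (inv_pos.2 hI_pos) (hf_pos _ hx0)
      rw [Real.norm_eq_abs, abs_of_pos hposx, norm_one, mul_one]
      rw [Real.mul_rpow (inv_nonneg.2 hI_pos.le) (hf_pos _ hx0).le]
      have h2 : f (x i0) ^ p = lam (x i0) ^ (e * p) := by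
        rw [hf]
        simp only []
        exact (Real.rpow_mul hlamx.le e p).symm
      rw [h2]
      rw [show lam (x i0) ^ p * (I⁻¹ ^ p * lam (x i0) ^ (e * p))
          = I⁻¹ ^ p * (lam (x i0) ^ p * lam (x i0) ^ (e * p)) from by ring]
      rw [← Real.rpow_add hlamx, harith]
    calc ∫ x in Q, lam (x i0) ^ p * ‖EuclideanSpace.single i0 (1:ℝ) + G x‖ ^ p
        = ∫ x in Q, I⁻¹ ^ p * f (x i0) := setIntegral_congr_fun hQmeas hpt
      _ = I⁻¹ ^ p * ∫ x in Q, f (x i0) := integral_const_mul _ _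
      _ = I⁻¹ ^ p * I := by
          rw [hQ, integral_cube_coord i0 f, ← hI]
      _ = I ^ ((1:ℝ) - p) := by
          rw [Real.inv_rpow hI_pos.le, ← Real.rpow_neg hI_pos.le]
          rw [show (1:ℝ) - p = -p + 1 from by ring, Real.rpow_add hI_pos, Real.rpow_one]
end
end
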